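/- Let M ∈ ℝ^{n×n} be symmetric stochastic with every diagonal entry M_{ii} ≥ 1/2, let H ∈ ℝ^{n×n} be symmetric with ξI ≤ H ≤ LI for reals 0 < ξ ≤ L, and let the step size satisfy 0 < α < 1/(2L). Then the spectral radius of M − αH equals its largest eigenvalue, ρ(M − αH) = λmax(M − αH), and moreover ρ(M − αH) ≤ 1 − αξ < 1. -/

import Mathlib

open Matrix

/-- The largest eigenvalue `λmax` of a real symmetric (Hermitian) matrix. -/
noncomputable def eigMax {m : Type*} [Fintype m] [DecidableEq m]
    {A : Matrix m m ℝ} (hA : A.IsHermitian) : ℝ :=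
  ⨆ i, hA.eigenvalues i

/-- The spectral radius `ρ(A) = max {|λ| : λ eigenvalue of A}` of a real symmetric
(Hermitian) matrix. -/
noncomputable def specRad {m : Type*} [Fintype m] [DecidableEq m]
    {A : Matrix m m ℝ} (hA : A.IsHermitian) : ℝ :=
  ⨆ i, |hA.eigenvalues i|

/-! For a doubly stochastic `P`, `∑ᵢⱼ Pᵢⱼ (vᵢ ± vⱼ)² = 2‖v‖² ± 2 vᵀPv ≥ 0`, so
`|vᵀPv| ≤ ‖v‖²`; if moreover `Pᵢᵢ ≥ 1/2`, then `2P - I` is doubly stochastic too, which gives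
`vᵀPv ≥ 0`. Together with `ξI ≤ H ≤ LI` this yields
`-αL‖v‖² ≤ vᵀ(M - αH)v ≤ (1 - αξ)‖v‖²`, bounding every eigenvalue of `M - αH`. The all-ones
vector is fixed by `M`, so `λmax ≥ 1 - αL > αL ≥ -λmin` because `αL < 1/2`; hence the spectral
radius is `λmax`. -/

namespace Matrix

variable {m : Type*} [Fintype m] [DecidableEq m]

section DoublyStochastic

variable {R : Type*} {P : Matrix m m R}

theorem sum_mul_add_smul_sq_of_mem_doublyStochastic [CommRing R] [PartialOrder R]
    [IsOrderedRing R] (hP : P ∈ doublyStochastic R m) (v : m → R) (s : R) :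
    ∑ i, ∑ j, P i j * (v i + s * v j) ^ 2 = (1 + s ^ 2) * (v ⬝ᵥ v) + 2 * s * (v ⬝ᵥ P *ᵥ v) := by
  have hrow : ∑ i, ∑ j, P i j * v i ^ 2 = v ⬝ᵥ v := by
    simp [← Finset.sum_mul, sum_row_of_mem_doublyStochastic hP, dotProduct, sq]
  have hcol : ∑ i, ∑ j, P i j * v j ^ 2 = v ⬝ᵥ v := by
    rw [Finset.sum_comm]
    simp [← Finset.sum_mul, sum_col_of_mem_doublyStochastic hP, dotProduct, sq]
  have hcross : ∑ i, ∑ j, P i j * (v i * v j) = v ⬝ᵥ P *ᵥ v := by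
    simp only [dotProduct, mulVec, Finset.mul_sum]
    exact Finset.sum_congr rfl fun i _ => Finset.sum_congr rfl fun j _ => by ring
  calc ∑ i, ∑ j, P i j * (v i + s * v j) ^ 2
      = ∑ i, ∑ j, P i j * v i ^ 2 + s ^ 2 * ∑ i, ∑ j, P i j * v j ^ 2
          + 2 * s * ∑ i, ∑ j, P i j * (v i * v j) := by
        simp only [Finset.mul_sum, ← Finset.sum_add_distrib]
        exact Finset.sum_congr rfl fun i _ => Finset.sum_congr rfl fun j _ => by ring
    _ = _ := by rw [hrow, hcol, hcross]; ring

theorem abs_dotProduct_mulVec_le_of_mem_doublyStochastic [CommRing R] [LinearOrder R]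
    [IsStrictOrderedRing R] (hP : P ∈ doublyStochastic R m)
    (v : m → R) : |v ⬝ᵥ P *ᵥ v| ≤ v ⬝ᵥ v := by
  have hsq (s : R) : 0 ≤ ∑ i, ∑ j, P i j * (v i + s * v j) ^ 2 :=
    Finset.sum_nonneg fun i _ => Finset.sum_nonneg fun j _ =>
      mul_nonneg (nonneg_of_mem_doublyStochastic hP) (sq_nonneg _)
  have hplus := hsq 1
  have hminus := hsq (-1)
  rw [sum_mul_add_smul_sq_of_mem_doublyStochastic hP] at hplus hminus
  exact abs_le.2 ⟨by linarith, by linarith⟩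

theorem two_smul_sub_one_mem_doublyStochastic [Field R] [LinearOrder R]
    [IsStrictOrderedRing R] (hP : P ∈ doublyStochastic R m)
    (hdiag : ∀ i, 1 / 2 ≤ P i i) : (2 : R) • P - 1 ∈ doublyStochastic R m := by
  refine mem_doublyStochastic_iff_sum.2 ⟨fun i j => ?_, fun i => ?_, fun j => ?_⟩
  · rcases eq_or_ne i j with rfl | hij
    · simp only [sub_apply, smul_apply, one_apply_eq, smul_eq_mul]
      linarith [hdiag i]
    · simpa [one_apply_ne hij] using nonneg_of_mem_doublyStochastic hP
  · norm_num [Finset.sum_sub_distrib, ← Finset.mul_sum, sum_row_of_mem_doublyStochastic hP,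
      one_apply]
  · norm_num [Finset.sum_sub_distrib, ← Finset.mul_sum, sum_col_of_mem_doublyStochastic hP,
      one_apply]

theorem dotProduct_mulVec_nonneg_of_mem_doublyStochastic [Field R] [LinearOrder R]
    [IsStrictOrderedRing R] (hP : P ∈ doublyStochastic R m)
    (hdiag : ∀ i, 1 / 2 ≤ P i i) (v : m → R) : 0 ≤ v ⬝ᵥ P *ᵥ v := by
  have h := abs_le.1 (abs_dotProduct_mulVec_le_of_mem_doublyStochastic
    (two_smul_sub_one_mem_doublyStochastic hP hdiag) v) |>.1
  simp only [sub_mulVec, one_mulVec, smul_mulVec, dotProduct_sub, dotProduct_smul,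
    smul_eq_mul] at h
  linarith

end DoublyStochastic

theorem IsHermitian.mem_doublyStochastic {P : Matrix m m ℝ} (hP : P.IsHermitian)
    (hnonneg : ∀ i j, 0 ≤ P i j) (hrow : ∀ i, ∑ j, P i j = 1) : P ∈ doublyStochastic ℝ m := by
  refine mem_doublyStochastic_iff_sum.2 ⟨hnonneg, hrow, fun j => ?_⟩
  simpa [fun i => (hP.apply i j).symm] using hrow j

namespace IsHermitian

variable {A : Matrix m m ℝ} (hA : A.IsHermitian)

theorem dotProduct_eq_sum_eigenvectorBasis (x y : m → ℝ) :
    x ⬝ᵥ y = ∑ i, (x ⬝ᵥ ⇑(hA.eigenvectorBasis i)) * (⇑(hA.eigenvectorBasis i) ⬝ᵥ y) := by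
  simpa only [EuclideanSpace.inner_eq_star_dotProduct, star_trivial, WithLp.ofLp_toLp,
    dotProduct_comm] using
    (hA.eigenvectorBasis.sum_inner_mul_inner (WithLp.toLp 2 x) (WithLp.toLp 2 y)).symm

theorem eigenvectorBasis_dotProduct_mulVec (i : m) (v : m → ℝ) :
    ⇑(hA.eigenvectorBasis i) ⬝ᵥ A *ᵥ v = hA.eigenvalues i * (v ⬝ᵥ ⇑(hA.eigenvectorBasis i)) := by
  rw [dotProduct_mulVec, ← mulVec_transpose, ← conjTranspose_eq_transpose_of_trivial, hA.eq,
    hA.mulVec_eigenvectorBasis, smul_dotProduct, dotProduct_comm, smul_eq_mul]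

theorem dotProduct_mulVec_eq_sum_eigenvalues (v : m → ℝ) :
    v ⬝ᵥ A *ᵥ v = ∑ i, hA.eigenvalues i * (v ⬝ᵥ ⇑(hA.eigenvectorBasis i)) ^ 2 := by
  rw [hA.dotProduct_eq_sum_eigenvectorBasis]
  refine Finset.sum_congr rfl fun i _ => ?_
  rw [hA.eigenvectorBasis_dotProduct_mulVec]
  ring

theorem dotProduct_self_eq_sum_sq (v : m → ℝ) :
    v ⬝ᵥ v = ∑ i, (v ⬝ᵥ ⇑(hA.eigenvectorBasis i)) ^ 2 := by
  rw [hA.dotProduct_eq_sum_eigenvectorBasis]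
  simp only [dotProduct_comm _ v, sq]

theorem eigenvalues_eq_dotProduct_mulVec (i : m) :
    hA.eigenvalues i = ⇑(hA.eigenvectorBasis i) ⬝ᵥ A *ᵥ ⇑(hA.eigenvectorBasis i) := by
  simpa using hA.eigenvalues_eq i

theorem eigenvectorBasis_dotProduct_self (i : m) :
    ⇑(hA.eigenvectorBasis i) ⬝ᵥ ⇑(hA.eigenvectorBasis i) = 1 := by
  simpa only [EuclideanSpace.inner_eq_star_dotProduct, star_trivial, if_pos] using
    orthonormal_iff_ite.1 hA.eigenvectorBasis.orthonormal i i

theorem eigenvalues_le_of_forall_dotProduct_mulVec_le {c : ℝ}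
    (h : ∀ v, v ⬝ᵥ A *ᵥ v ≤ c * (v ⬝ᵥ v)) (i : m) : hA.eigenvalues i ≤ c := by
  simpa [← hA.eigenvalues_eq_dotProduct_mulVec, hA.eigenvectorBasis_dotProduct_self] using
    h (hA.eigenvectorBasis i)

theorem le_eigenvalues_of_forall_le_dotProduct_mulVec {c : ℝ}
    (h : ∀ v, c * (v ⬝ᵥ v) ≤ v ⬝ᵥ A *ᵥ v) (i : m) : c ≤ hA.eigenvalues i := by
  simpa [← hA.eigenvalues_eq_dotProduct_mulVec, hA.eigenvectorBasis_dotProduct_self] using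
    h (hA.eigenvectorBasis i)

theorem eigenvalues_le_eigMax (i : m) : hA.eigenvalues i ≤ eigMax hA :=
  le_ciSup (Set.finite_range _).bddAbove i

theorem dotProduct_mulVec_le_eigMax_mul (v : m → ℝ) :
    v ⬝ᵥ A *ᵥ v ≤ eigMax hA * (v ⬝ᵥ v) := by
  rw [hA.dotProduct_mulVec_eq_sum_eigenvalues, hA.dotProduct_self_eq_sum_sq, Finset.mul_sum]
  exact Finset.sum_le_sum fun i _ =>
    mul_le_mul_of_nonneg_right (hA.eigenvalues_le_eigMax i) (sq_nonneg _)

theorem le_eigMax_of_le_dotProduct_mulVec {c : ℝ} {v : m → ℝ} (hv : 0 < v ⬝ᵥ v)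
    (h : c * (v ⬝ᵥ v) ≤ v ⬝ᵥ A *ᵥ v) : c ≤ eigMax hA :=
  le_of_mul_le_mul_right (h.trans (hA.dotProduct_mulVec_le_eigMax_mul v)) hv

theorem eigMax_le [Nonempty m] {c : ℝ} (h : ∀ i, hA.eigenvalues i ≤ c) : eigMax hA ≤ c :=
  ciSup_le h

theorem specRad_eq_eigMax [Nonempty m] (h : ∀ i, -eigMax hA ≤ hA.eigenvalues i) :
    specRad hA = eigMax hA :=
  le_antisymm (ciSup_le fun i => abs_le.2 ⟨h i, hA.eigenvalues_le_eigMax i⟩)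
    (ciSup_mono (Set.finite_range _).bddAbove fun _ => le_abs_self _)

end IsHermitian

end Matrix

theorem specRad_stochastic_sub_smul_hessian_general
    {n : ℕ} (hn : 0 < n) (M H : Matrix (Fin n) (Fin n) ℝ)
    (hM : M.IsHermitian) (hMnonneg : ∀ i j, 0 ≤ M i j) (hMrow : ∀ i, ∑ j, M i j = 1)
    (hMdiag : ∀ i, (1 : ℝ) / 2 ≤ M i i)
    (ξ L : ℝ) (hξ : 0 < ξ)
    (hHbound : ∀ v : Fin n → ℝ,
      ξ * (v ⬝ᵥ v) ≤ v ⬝ᵥ H.mulVec v ∧ v ⬝ᵥ H.mulVec v ≤ L * (v ⬝ᵥ v))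
    (α : ℝ) (hα : 0 < α) (hα2 : α < 1 / (2 * L))
    (hMH : (M - α • H).IsHermitian) :
    specRad hMH = eigMax hMH ∧ specRad hMH ≤ 1 - α * ξ ∧ 1 - α * ξ < 1 := by
  have : Nonempty (Fin n) := ⟨⟨0, hn⟩⟩
  have hL : 0 < L := by
    by_contra! hL
    exact (hα.trans hα2).not_ge (one_div_nonpos.2 (by linarith))
  have hαL : α * L < 1 / 2 := by
    rw [lt_div_iff₀ (by positivity)] at hα2
    linarith
  have hMds := hM.mem_doublyStochastic hMnonneg hMrow
  have hquad (v : Fin n → ℝ) :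
      v ⬝ᵥ (M - α • H) *ᵥ v = v ⬝ᵥ M *ᵥ v - α * (v ⬝ᵥ H *ᵥ v) := by
    rw [sub_mulVec, smul_mulVec, dotProduct_sub, dotProduct_smul, smul_eq_mul]
  have hlo : ∀ i, -(α * L) ≤ hMH.eigenvalues i :=
    hMH.le_eigenvalues_of_forall_le_dotProduct_mulVec fun v => by
      rw [hquad]
      linarith [dotProduct_mulVec_nonneg_of_mem_doublyStochastic hMds hMdiag v,
        mul_le_mul_of_nonneg_left (hHbound v).2 hα.le]
  have hhi : ∀ i, hMH.eigenvalues i ≤ 1 - α * ξ :=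
    hMH.eigenvalues_le_of_forall_dotProduct_mulVec_le fun v => by
      rw [hquad]
      linarith [le_of_abs_le (abs_dotProduct_mulVec_le_of_mem_doublyStochastic hMds v),
        mul_le_mul_of_nonneg_left (hHbound v).1 hα.le]
  have hmax : 1 - α * L ≤ eigMax hMH := by
    have hone : (0 : ℝ) < (1 : Fin n → ℝ) ⬝ᵥ 1 := by simpa using hn
    refine hMH.le_eigMax_of_le_dotProduct_mulVec hone ?_
    rw [hquad, mulVec_one_of_mem_doublyStochastic hMds]
    linarith [mul_le_mul_of_nonneg_left (hHbound 1).2 hα.le]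
  have hspec := hMH.specRad_eq_eigMax fun i => by linarith [hlo i]
  exact ⟨hspec, hspec ▸ hMH.eigMax_le hhi, sub_lt_self 1 (mul_pos hα hξ)⟩

/-- Let `M` be symmetric stochastic with all diagonal entries `≥ 1/2`, `H`
symmetric with `ξI ≤ H ≤ LI` where `0 < ξ ≤ L`, and `0 < α < 1/(2L)`. Then
`ρ(M − αH) = λmax(M − αH)` and `ρ(M − αH) ≤ 1 − αξ < 1`. -/
theorem specRad_stochastic_sub_smul_hessian
    {n : ℕ} (hn : 0 < n) (M H : Matrix (Fin n) (Fin n) ℝ)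
    (hM : M.IsHermitian) (hMnonneg : ∀ i j, 0 ≤ M i j) (hMrow : ∀ i, ∑ j, M i j = 1)
    (hMdiag : ∀ i, (1 : ℝ) / 2 ≤ M i i)
    (hH : H.IsHermitian)
    (ξ L : ℝ) (hξ : 0 < ξ) (hξL : ξ ≤ L)
    (hHbound : ∀ v : Fin n → ℝ,
      ξ * (v ⬝ᵥ v) ≤ v ⬝ᵥ H.mulVec v ∧ v ⬝ᵥ H.mulVec v ≤ L * (v ⬝ᵥ v))
    (α : ℝ) (hα : 0 < α) (hα2 : α < 1 / (2 * L))
    (hMH : (M - α • H).IsHermitian) :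
    specRad hMH = eigMax hMH ∧ specRad hMH ≤ 1 - α * ξ ∧ 1 - α * ξ < 1 :=
  specRad_stochastic_sub_smul_hessian_general hn M H hM hMnonneg hMrow hMdiag ξ L hξ hHbound α hα
    hα2 hMH
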